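/- arXiv:1709.05192 — 4 statements merged into one kernel-verified Lean document; each statement's English description precedes it below -/
import Mathlib

section
/- Let B be a separable real Banach space, and let (X_n)_{n≥1} be a sequence of independent B-valued random variables on a probability space (Ω, P) such that, almost surely, the partial sums Σ_{n≤N} X_n converge in B as N → ∞; let X denote the almost sure limit. Then the support of the law of X equals the closure in B of the set of all s ∈ B for which there exists a sequence (x_n)_{n≥1} with x_n in the support of the law of X_n for every n and Σ_{n≤N} x_n → s as N → ∞. -/
/-!
Almost surely every `Xₙ(ω)` lies in the support of the law of `Xₙ` (second countability), so
almost surely `X(ω)` is the sum of such a series; hence the support of `X` lies in the closure.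
Conversely let `xₙ ∈ supp Xₙ` with `∑ xₙ = a`. For large `N` the partial sum `∑_{n<N} xₙ` is
close to `a`, and, since the partial sums of `∑ Xₙ` are almost surely Cauchy, the tail event
`{∀ M ≥ N, ‖∑_{N ≤ n < M} Xₙ‖ ≤ δ}` has positive probability. The head event
`{∀ n < N, Xₙ ∈ B(xₙ, r)}` has positive probability as well, and the two are independent, so
their intersection, on which `X` is close to `a`, has positive probability.
-/

noncomputable section
open MeasureTheory Set

/-- `e(z) = exp(2πiz)`. -/
def e (z : ℂ) : ℂ := Complex.exp (2 * Real.pi * Complex.I * z)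

/-- Fourier coefficient `f̂(h) = ∫₀¹ f(t) e(-ht) dt`. -/
def fourierCoeff01 (f : ℝ → ℂ) (h : ℤ) : ℂ := ∫ t in (0:ℝ)..(1:ℝ), f t * e (-(h : ℂ) * (t : ℂ))

/-- The set `S`: continuous `f : [0,1] → ℂ` with `f(0)=0`, `f(1)` real in `[-2,2]`, and
`g(t) = f(t) - t·f(1)` has purely imaginary Fourier coefficients with `|ĝ(h)| ≤ 1/(π|h|)`. -/
def memS (f : ℝ → ℂ) : Prop :=
  ContinuousOn f (Set.Icc 0 1) ∧ f 0 = 0 ∧ (f 1).im = 0 ∧ |(f 1).re| ≤ 2 ∧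
  ∀ h : ℤ, h ≠ 0 →
    (fourierCoeff01 (fun t => f t - (t : ℂ) * f 1) h).re = 0 ∧
    ‖fourierCoeff01 (fun t => f t - (t : ℂ) * f 1) h‖ ≤ 1 / (Real.pi * |(h : ℝ)|)

open ProbabilityTheory Filter Topology

section LawSupport

variable {Ω B : Type*} [MeasurableSpace Ω] [TopologicalSpace B] {P : Measure Ω} {X : Ω → B}

/-- `X` need not be measurable: `P (X ⁻¹' U)` is then an outer measure. -/
def lawSupport (P : Measure Ω) (X : Ω → B) : Set B :=
  {s | ∀ U : Set B, IsOpen U → s ∈ U → 0 < P (X ⁻¹' U)}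

lemma lawSupport_eq_biInter (P : Measure Ω) (X : Ω → B) :
    lawSupport P X = ⋂ U ∈ {U : Set B | IsOpen U ∧ P (X ⁻¹' U) = 0}, Uᶜ := by
  ext s
  simp only [lawSupport, pos_iff_ne_zero, mem_ofPred_eq, mem_iInter, mem_compl_iff, and_imp]
  exact forall₂_congr fun U _ => imp_not_comm

lemma isClosed_lawSupport : IsClosed (lawSupport P X) := by
  rw [lawSupport_eq_biInter]
  exact isClosed_biInter fun U hU => hU.1.isClosed_compl

lemma ae_mem_lawSupport [SecondCountableTopology B] : ∀ᵐ ω ∂P, X ω ∈ lawSupport P X := by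
  obtain ⟨T, hTS, hTc, hT⟩ := TopologicalSpace.isOpen_biUnion_countable
    {U : Set B | IsOpen U ∧ P (X ⁻¹' U) = 0} id fun U hU => hU.1
  have hcompl : (lawSupport P X)ᶜ = ⋃ U ∈ T, U := by
    simp only [lawSupport_eq_biInter, compl_iInter, compl_compl, id] at hT ⊢
    exact hT.symm
  change P (X ⁻¹' (lawSupport P X)ᶜ) = 0
  rw [hcompl, preimage_iUnion₂, measure_biUnion_null_iff hTc]
  exact fun U hU => (hTS hU).2

lemma lawSupport_subset_closure_of_ae_mem {C : Set B} (h : ∀ᵐ ω ∂P, X ω ∈ C) :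
    lawSupport P X ⊆ closure C := by
  intro s hs
  by_contra hsC
  refine (hs _ isClosed_closure.isOpen_compl hsC).ne' (measure_mono_null ?_ (ae_iff.1 h))
  exact fun ω hω hC => hω (subset_closure hC)

lemma mem_lawSupport_iff_ball {B : Type*} [PseudoMetricSpace B] {X : Ω → B} {s : B} :
    s ∈ lawSupport P X ↔ ∀ ε > 0, 0 < P (X ⁻¹' Metric.ball s ε) := by
  refine ⟨fun h ε hε => h _ Metric.isOpen_ball (Metric.mem_ball_self hε), fun h U hU hsU => ?_⟩
  obtain ⟨ε, hε, hball⟩ := Metric.isOpen_iff.1 hU s hsU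
  exact (h ε hε).trans_le (measure_mono (preimage_mono hball))

end LawSupport

lemma eventually_pos_measure_forall_dist_le {Ω B : Type*} [MeasurableSpace Ω]
    [PseudoMetricSpace B] {P : Measure Ω} [NeZero P] {S : ℕ → Ω → B}
    (hS : ∀ᵐ ω ∂P, CauchySeq fun M => S M ω) {δ : ℝ} (hδ : 0 < δ) :
    ∀ᶠ N in atTop, 0 < P {ω | ∀ M ≥ N, dist (S N ω) (S M ω) ≤ δ} := by
  set G : ℕ → Set Ω := fun N₀ => {ω | ∀ N ≥ N₀, ∀ M ≥ N, dist (S N ω) (S M ω) ≤ δ}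
  have hcover : ∀ᵐ ω ∂P, ∃ N₀, ω ∈ G N₀ := hS.mono fun ω h => by
    obtain ⟨N₀, hN₀⟩ := Metric.cauchySeq_iff.1 h δ hδ
    exact ⟨N₀, fun N hN M hM => (hN₀ N hN M (hN.trans hM)).le⟩
  obtain ⟨N₀, hN₀⟩ : ∃ N₀, P (G N₀) ≠ 0 := by
    by_contra! h
    obtain ⟨ω, ⟨N₀, hω⟩, hnot⟩ := (hcover.and
      (ae_all_iff.2 fun N₀ => measure_eq_zero_iff_ae_notMem.1 (h N₀))).exists
    exact hnot N₀ hω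
  filter_upwards [eventually_ge_atTop N₀] with N hN
  exact (pos_iff_ne_zero.2 hN₀).trans_le (measure_mono fun ω hω => hω N hN)

section Independence

variable {Ω B : Type*} [mB : MeasurableSpace B] {Xn : ℕ → Ω → B}

lemma measurable_of_mem_biSup_comap {s : Set ℕ} {n : ℕ} (hn : n ∈ s) :
    Measurable[(⨆ k ∈ s, MeasurableSpace.comap (Xn k) mB)] (Xn n) :=
  measurable_iff_comap_le.2
    (le_iSup₂ (f := fun k (_ : k ∈ s) => MeasurableSpace.comap (Xn k) mB) n hn)

lemma measurableSet_biInter_preimage_range {m : MeasurableSpace Ω} {N : ℕ}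
    (hXn : ∀ n < N, Measurable[m] (Xn n)) {U : ℕ → Set B} (hU : ∀ n, MeasurableSet (U n)) :
    MeasurableSet[m] (⋂ n ∈ Finset.range N, Xn n ⁻¹' U n) :=
  .biInter (Finset.range N).countable_toSet fun n hn => hXn n (Finset.mem_range.1 hn) (hU n)

lemma measurableSet_forall_dist_partialSum_le [NormedAddCommGroup B] [BorelSpace B]
    [SecondCountableTopology B] {m : MeasurableSpace Ω} {N : ℕ}
    (hXn : ∀ n ≥ N, Measurable[m] (Xn n)) (δ : ℝ) :
    MeasurableSet[m]
      {ω | ∀ M ≥ N, dist (∑ n ∈ Finset.range N, Xn n ω) (∑ n ∈ Finset.range M, Xn n ω) ≤ δ} := by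
  have hset : {ω | ∀ M ≥ N, dist (∑ n ∈ Finset.range N, Xn n ω)
      (∑ n ∈ Finset.range M, Xn n ω) ≤ δ} =
      ⋂ M ∈ Ici N, {ω | ‖∑ n ∈ Finset.Ico N M, Xn n ω‖ ≤ δ} := by
    ext ω
    simp only [mem_ofPred_eq, mem_iInter, mem_Ici, ge_iff_le]
    refine forall₂_congr fun M hM => ?_
    rw [dist_eq_norm', Finset.sum_Ico_eq_sub _ hM]
  rw [hset]
  refine .biInter (to_countable _) fun M _ => measurableSet_le ?_ measurable_const
  exact (Finset.measurable_sum _ fun n hn => hXn n (Finset.mem_Ico.1 hn).1).norm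

lemma ProbabilityTheory.iIndepFun.measure_inter_of_measurableSet_biSup_compl
    [MeasurableSpace Ω] {P : Measure Ω} (hmeas : ∀ n, Measurable (Xn n)) (hindep : iIndepFun Xn P) (s : Set ℕ) {F E : Set Ω}
    (hF : MeasurableSet[(⨆ k ∈ s, MeasurableSpace.comap (Xn k) mB)] F)
    (hE : MeasurableSet[(⨆ k ∈ sᶜ, MeasurableSpace.comap (Xn k) mB)] E) :
    P (F ∩ E) = P F * P E :=
  (Indep_iff _ _ _).1
    (indep_biSup_compl (fun n => (hmeas n).comap_le) hindep.iIndep s) F E hF hE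

end Independence

lemma dist_sum_range_le_of_forall_dist_lt {B : Type*} [SeminormedAddCommGroup B] {y x : ℕ → B}
    {N : ℕ} {δ : ℝ} (hδ : 0 ≤ δ) (h : ∀ n < N, dist (y n) (x n) < δ / (N + 1)) :
    dist (∑ n ∈ Finset.range N, y n) (∑ n ∈ Finset.range N, x n) ≤ δ :=
  calc _ ≤ ∑ n ∈ Finset.range N, dist (y n) (x n) := dist_sum_sum_le _ _ _
    _ ≤ ∑ _n ∈ Finset.range N, δ / (N + 1) :=
      Finset.sum_le_sum fun n hn => (h n (Finset.mem_range.1 hn)).le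
    _ = N * δ / (N + 1) := by simp [mul_div_assoc]
    _ ≤ δ := by rw [div_le_iff₀ (by positivity)]; nlinarith

lemma mem_lawSupport_of_tendsto_sum {Ω B : Type*} [MeasurableSpace Ω] [NormedAddCommGroup B]
    [MeasurableSpace B] [BorelSpace B] [SecondCountableTopology B] {P : Measure Ω}
    [IsProbabilityMeasure P] {Xn : ℕ → Ω → B} (hmeas : ∀ n, Measurable (Xn n))
    (hindep : iIndepFun Xn P) {X : Ω → B}
    (hconv : ∀ᵐ ω ∂P, Tendsto (fun N => ∑ n ∈ Finset.range N, Xn n ω) atTop (𝓝 (X ω)))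
    {x : ℕ → B} (hx : ∀ n, x n ∈ lawSupport P (Xn n)) {a : B}
    (ha : Tendsto (fun N => ∑ n ∈ Finset.range N, x n) atTop (𝓝 a)) :
    a ∈ lawSupport P X := by
  rw [mem_lawSupport_iff_ball]
  intro ε hε
  set δ := ε / 3 with hδ_def
  have hδ : 0 < δ := by positivity
  obtain ⟨N, hE_pos, hN_a⟩ := ((eventually_pos_measure_forall_dist_le
    (hconv.mono fun ω h => h.cauchySeq) hδ).and (ha (Metric.ball_mem_nhds a hδ))).exists
  set r := δ / (N + 1)
  have hr : 0 < r := by positivity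
  set F := ⋂ n ∈ Finset.range N, Xn n ⁻¹' Metric.ball (x n) r
  set E := {ω | ∀ M ≥ N,
    dist (∑ n ∈ Finset.range N, Xn n ω) (∑ n ∈ Finset.range M, Xn n ω) ≤ δ}
  have hF_pos : P F ≠ 0 := by
    rw [hindep.meas_biInter fun n _ => ⟨_, measurableSet_ball, rfl⟩, Finset.prod_ne_zero_iff]
    exact fun n _ => ((mem_lawSupport_iff_ball.1 (hx n)) r hr).ne'
  have hFE : P (F ∩ E) = P F * P E :=
    hindep.measure_inter_of_measurableSet_biSup_compl hmeas {n | n < N}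
      (measurableSet_biInter_preimage_range (fun n hn => measurable_of_mem_biSup_comap hn)
        fun n => measurableSet_ball)
      (measurableSet_forall_dist_partialSum_le
        (fun n hn => measurable_of_mem_biSup_comap (not_lt.2 hn)) δ)
  have hFE_sub : ∀ᵐ ω ∂P, ω ∈ F ∩ E → X ω ∈ Metric.ball a ε := by
    filter_upwards [hconv] with ω hω ⟨hωF, hωE⟩
    have h_tail : dist (∑ n ∈ Finset.range N, Xn n ω) (X ω) ≤ δ :=
      le_of_tendsto (tendsto_const_nhds.dist hω) (eventually_atTop.2 ⟨N, hωE⟩)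
    have h_head : dist (∑ n ∈ Finset.range N, Xn n ω) (∑ n ∈ Finset.range N, x n) ≤ δ :=
      dist_sum_range_le_of_forall_dist_lt hδ.le fun n hn =>
        mem_iInter₂.1 hωF n (Finset.mem_range.2 hn)
    calc dist (X ω) a ≤ dist (X ω) (∑ n ∈ Finset.range N, Xn n ω)
          + dist (∑ n ∈ Finset.range N, Xn n ω) (∑ n ∈ Finset.range N, x n)
          + dist (∑ n ∈ Finset.range N, x n) a := dist_triangle4 _ _ _ _
      _ < δ + δ + δ := by
        rw [dist_comm] at h_tail
        linarith [Metric.mem_ball.1 hN_a]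
      _ = ε := by rw [hδ_def]; ring
  calc 0 < P F * P E := ENNReal.mul_pos hF_pos hE_pos.ne'
    _ = P (F ∩ E) := hFE.symm
    _ ≤ P (X ⁻¹' Metric.ball a ε) := measure_mono_ae hFE_sub

theorem stmt_4_general
    {B : Type*} [NormedAddCommGroup B]
    [TopologicalSpace.SeparableSpace B] [MeasurableSpace B] [BorelSpace B]
    {Ω : Type*} [MeasurableSpace Ω] (P : Measure Ω) [IsProbabilityMeasure P]
    (Xn : ℕ → Ω → B) (hmeas : ∀ n, Measurable (Xn n))
    (hindep : ProbabilityTheory.iIndepFun Xn P)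
    (X : Ω → B)
    (hconv : ∀ᵐ ω ∂P,
      Filter.Tendsto (fun N => ∑ n ∈ Finset.range N, Xn n ω) Filter.atTop (nhds (X ω))) :
    {s : B | ∀ U : Set B, IsOpen U → s ∈ U → 0 < P (X ⁻¹' U)} =
      closure {s : B | ∃ x : ℕ → B,
        (∀ n, ∀ U : Set B, IsOpen U → x n ∈ U → 0 < P (Xn n ⁻¹' U)) ∧
        Filter.Tendsto (fun N => ∑ n ∈ Finset.range N, x n) Filter.atTop (nhds s)} := by
  show lawSupport P X = closure {s | ∃ x : ℕ → B, (∀ n, x n ∈ lawSupport P (Xn n)) ∧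
    Tendsto (fun N => ∑ n ∈ Finset.range N, x n) atTop (𝓝 s)}
  refine (lawSupport_subset_closure_of_ae_mem ?_).antisymm (closure_minimal ?_ isClosed_lawSupport)
  · filter_upwards [hconv, ae_all_iff.2 fun n => ae_mem_lawSupport (P := P) (X := Xn n)]
      with ω hω hmem
    exact ⟨_, hmem, hω⟩
  · rintro a ⟨x, hx, ha⟩
    exact mem_lawSupport_of_tendsto_sum hmeas hindep hconv hx ha

/-- Support of almost surely convergent series of independent Banach-valued random
variables: the support of the law of X = Σ X_n is the closure of the set of sums of
convergent series Σ x_n with x_n in the support of the law of X_n. -/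
theorem stmt_4
    {B : Type*} [NormedAddCommGroup B] [NormedSpace ℝ B] [CompleteSpace B]
    [TopologicalSpace.SeparableSpace B] [MeasurableSpace B] [BorelSpace B]
    {Ω : Type*} [MeasurableSpace Ω] (P : Measure Ω) [IsProbabilityMeasure P]
    (Xn : ℕ → Ω → B) (hmeas : ∀ n, Measurable (Xn n))
    (hindep : ProbabilityTheory.iIndepFun Xn P)
    (X : Ω → B)
    (hconv : ∀ᵐ ω ∂P,
      Filter.Tendsto (fun N => ∑ n ∈ Finset.range N, Xn n ω) Filter.atTop (nhds (X ω))) :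
    {s : B | ∀ U : Set B, IsOpen U → s ∈ U → 0 < P (X ⁻¹' U)} =
      closure {s : B | ∃ x : ℕ → B,
        (∀ n, ∀ U : Set B, IsOpen U → x n ∈ U → 0 < P (Xn n ⁻¹' U)) ∧
        Filter.Tendsto (fun N => ∑ n ∈ Finset.range N, x n) Filter.atTop (nhds s)} :=
  stmt_4_general P Xn hmeas hindep X hconv


end
end

section
/- Let X ⊆ ℂ be a nonempty compact subset. The following are equivalent: (1) there exists f ∈ F₀ such that X = f([0,1]); (2) 0 ∈ X, there exists a real number α such that X is invariant under the reflection z ↦ 2α − conj(z) (the symmetry with respect to the line Re(z) = α), and there exists a continuous function f : [0,1] → ℂ with X = f([0,1]); (3) 0 ∈ X, there exists a real number α such that X is invariant under the reflection z ↦ 2α − conj(z), and X is connected and locally connected (as a topological subspace of ℂ). -/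
noncomputable section
open MeasureTheory Set

/-- Membership in F₀: continuous on [0,1], f(0) = 0 and f(t) + conj(f(1-t)) = f(1). -/
def memF0 (f : ℝ → ℂ) : Prop :=
  ContinuousOn f (Set.Icc 0 1) ∧ f 0 = 0 ∧
    ∀ t ∈ Set.Icc (0:ℝ) 1, f t + (starRingEnd ℂ) (f (1 - t)) = f 1

/-!
(1) ⇔ (2): for `f ∈ F₀` the point `f (1 - t)` is the reflection of `f t` in the line
`Re z = Re f(1/2)`, so `f([0,1])` is symmetric. Conversely, by connectedness `X` meets the axis
`Re z = α` at some `p`; a path from `0` to `p` covering `X`, followed by its reflection traversed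
backwards, lies in `F₀` and has image `X`.

(2) ⇒ (3): a continuous surjection from `[0,1]` onto a Hausdorff space is a quotient map, and
local connectedness passes to quotients.

(3) ⇒ (2) is the Hahn–Mazurkiewicz theorem. In a compact, connected, locally connected metric
space, close points lie in a small connected set, uniformly. Hence a `δₙ`-chain whose first `Nₙ`
points form a `δₙ`-net can be refined by replacing each step `cₙ i → cₙ (i + 1)` with a block of
fixed length `L` of a `δₙ₊₁`-chain which stays within `2⁻ⁿ` of `cₙ i` and passes through the
points of a `δₙ₊₁`-net lying within `δₙ` of `cₙ i`. The step functions `t ↦ cₙ ⌊Nₙ t⌋₊` then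
converge uniformly, and the limit is continuous and onto.
-/

open Metric Function

section Chains

variable {E : Type*}

def chainAppend (m : ℕ) (f g : ℕ → E) (j : ℕ) : E := if j < m then f j else g (j - m)

lemma chainAppend_add {m : ℕ} {f g : ℕ → E} (j : ℕ) : chainAppend m f g (m + j) = g j := by
  simp [chainAppend]

lemma chainAppend_of_le {m : ℕ} {f g : ℕ → E} (hfg : f m = g 0) {j : ℕ} (hj : j ≤ m) :
    chainAppend m f g j = f j := by
  rcases hj.lt_or_eq with hj | rfl
  · simp [chainAppend, hj]
  · simp [chainAppend, hfg]

/-- The blocks `B 0, …, B (N - 1)`, each cut to length `L`, laid end to end, then `z` forever. -/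
def glue (N L : ℕ) (B : ℕ → ℕ → E) (z : E) (j : ℕ) : E :=
  if j < N * L then B (j / L) (j % L) else z

section glue

variable {N L : ℕ} {B : ℕ → ℕ → E} {c : ℕ → E}

lemma glue_add {z : E} {i r : ℕ} (hi : i < N) (hr : r < L) : glue N L B z (L * i + r) = B i r := by
  have hiL : L * i + r < N * L := by nlinarith
  simp [glue, hiL, Nat.mul_add_div (hr.trans_le' (Nat.zero_le r)), Nat.div_eq_of_lt hr,
    Nat.mod_eq_of_lt hr]

lemma glue_of_le {z : E} {j : ℕ} (hj : N * L ≤ j) : glue N L B z j = z := by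
  simp [glue, hj.not_gt]

lemma glue_mul (hL : 0 < L) (hB0 : ∀ i, B i 0 = c i) (hc : ∀ j, N ≤ j → c j = c N) (i : ℕ) :
    glue N L B (c N) (L * i) = c i := by
  rcases lt_or_ge i N with hi | hi
  · simpa [hB0] using glue_add (B := B) (z := c N) hi hL
  · rw [glue_of_le (by rw [mul_comm]; exact Nat.mul_le_mul_left L hi), hc i hi]

lemma glue_add_of_le (hL : 0 < L) (hB0 : ∀ i, B i 0 = c i) (hc : ∀ j, N ≤ j → c j = c N)
    (hBL : ∀ i < N, B i L = c (i + 1)) {i r : ℕ} (hi : i < N) (hr : r ≤ L) :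
    glue N L B (c N) (L * i + r) = B i r := by
  rcases hr.lt_or_eq with hr | rfl
  · exact glue_add hi hr
  · rw [← mul_add_one, glue_mul hL hB0 hc, hBL i hi]

end glue

variable [PseudoMetricSpace E]

/-- Chains are sequences that come to rest at step `m`, so padding them to a common length is
free. -/
structure IsDistChain (δ : ℝ) (m : ℕ) (f : ℕ → E) : Prop where
  dist_lt : ∀ j, dist (f j) (f (j + 1)) < δ
  eq_of_le : ∀ j, m ≤ j → f j = f m

namespace IsDistChain

variable {δ : ℝ} {m m' : ℕ} {f g : ℕ → E}

lemma mono (hf : IsDistChain δ m f) (hm : m ≤ m') : IsDistChain δ m' f :=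
  ⟨hf.dist_lt, fun j hj => (hf.eq_of_le j (hm.trans hj)).trans (hf.eq_of_le m' hm).symm⟩

lemma exists_le_eq_of_mem_range (hf : IsDistChain δ m f) {p : E} (hp : p ∈ range f) :
    ∃ j ≤ m, f j = p := by
  obtain ⟨j, rfl⟩ := hp
  rcases le_total j m with hj | hj
  · exact ⟨j, hj, rfl⟩
  · exact ⟨m, le_rfl, (hf.eq_of_le j hj).symm⟩

lemma append (hf : IsDistChain δ m f) (hg : IsDistChain δ m' g) (hfg : f m = g 0) :
    IsDistChain δ (m + m') (chainAppend m f g) := by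
  refine ⟨fun j => ?_, fun j hj => ?_⟩
  · rcases lt_or_ge j m with hj | hj
    · rw [chainAppend_of_le hfg hj.le, chainAppend_of_le hfg hj]
      exact hf.dist_lt j
    · obtain ⟨k, rfl⟩ := Nat.exists_eq_add_of_le hj
      rw [add_assoc, chainAppend_add, chainAppend_add]
      exact hg.dist_lt k
  · obtain ⟨k, rfl⟩ := Nat.exists_eq_add_of_le (le_of_add_le_left hj)
    rw [chainAppend_add, chainAppend_add]
    exact hg.eq_of_le k (by omega)

lemma range_append (hf : IsDistChain δ m f) (hfg : f m = g 0) :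
    range (chainAppend m f g) = range f ∪ range g := by
  refine Subset.antisymm (range_subset_iff.2 fun j => ?_) (union_subset ?_ ?_)
  · unfold chainAppend
    split_ifs
    exacts [Or.inl (mem_range_self j), Or.inr (mem_range_self _)]
  · rintro _ ⟨j, rfl⟩
    obtain ⟨k, hk, hkj⟩ := hf.exists_le_eq_of_mem_range (mem_range_self j)
    exact ⟨k, (chainAppend_of_le hfg hk).trans hkj⟩
  · rintro _ ⟨j, rfl⟩
    exact ⟨m + j, chainAppend_add j⟩

end IsDistChain

def ChainJoins (δ : ℝ) (T D : Set E) (x y : E) : Prop :=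
  ∃ m f, IsDistChain δ m f ∧ f 0 = x ∧ f m = y ∧ range f ⊆ T ∧ D ⊆ range f

namespace ChainJoins

variable {δ : ℝ} {T T' D D' : Set E} {x y z : E}

lemma mono (h : ChainJoins δ T D x y) (hT : T ⊆ T') (hD : D' ⊆ D) : ChainJoins δ T' D' x y :=
  let ⟨m, f, hf, hx, hy, hfT, hDf⟩ := h
  ⟨m, f, hf, hx, hy, hfT.trans hT, hD.trans hDf⟩

lemma trans (h : ChainJoins δ T D x y) (h' : ChainJoins δ T D' y z) :
    ChainJoins δ T (D ∪ D') x z := by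
  obtain ⟨m, f, hf, hx, hy, hfT, hDf⟩ := h
  obtain ⟨m', g, hg, hy', hz, hgT, hDg⟩ := h'
  have hfg : f m = g 0 := hy.trans hy'.symm
  refine ⟨m + m', chainAppend m f g, hf.append hg hfg, ?_, ?_, ?_, ?_⟩
  · rw [chainAppend_of_le hfg (Nat.zero_le m), hx]
  · rw [chainAppend_add, hz]
  · rw [hf.range_append hfg]; exact union_subset hfT hgT
  · rw [hf.range_append hfg]; exact union_subset_union hDf hDg

lemma of_dist_lt (hx : x ∈ T) (hy : y ∈ T) (hxy : dist x y < δ) : ChainJoins δ T {x, y} x y := by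
  have hδ : 0 < δ := dist_nonneg.trans_lt hxy
  refine ⟨1, fun j => if j = 0 then x else y, ⟨fun j => ?_, fun j hj => ?_⟩, rfl, rfl, ?_, ?_⟩
  · rcases j with _ | j <;> simp [hxy, hδ]
  · simp [Nat.one_le_iff_ne_zero.1 hj]
  · rintro _ ⟨j, rfl⟩; dsimp only; split_ifs <;> assumption
  · rintro _ (rfl | rfl)
    exacts [⟨0, rfl⟩, ⟨1, rfl⟩]

end ChainJoins

lemma IsPreconnected.chainJoins {δ : ℝ} (hδ : 0 < δ) {T : Set E} (hT : IsPreconnected T)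
    {x y : E} (hx : x ∈ T) (hy : y ∈ T) : ChainJoins δ T {x, y} x y := by
  refine hT.induction₂' (fun x y => ChainJoins δ T {x, y} x y) (fun x hx => ?_)
    (fun x y z _ _ _ hxy hyz => (hxy.trans hyz).mono subset_rfl ?_) hx hy
  · filter_upwards [self_mem_nhdsWithin, mem_nhdsWithin_of_mem_nhds (ball_mem_nhds x hδ)]
      with y hy hxy
    exact ⟨.of_dist_lt hx hy (mem_ball'.1 hxy), .of_dist_lt hy hx (mem_ball.1 hxy)⟩
  · exact insert_subset (Or.inl (mem_insert x _))
      (singleton_subset_iff.2 (Or.inr (mem_insert_of_mem y (mem_singleton z))))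

lemma IsPreconnected.chainJoins_of_finite {δ : ℝ} (hδ : 0 < δ) {T D : Set E}
    (hT : IsPreconnected T) (hD : D.Finite) (hDT : D ⊆ T) {x y : E} (hx : x ∈ T) (hy : y ∈ T) :
    ChainJoins δ T D x y := by
  induction D, hD using Set.Finite.induction_on generalizing y with
  | empty => exact (hT.chainJoins hδ hx hy).mono subset_rfl (empty_subset _)
  | @insert p D _ _ ih =>
    have hp : p ∈ T := hDT (mem_insert p D)
    refine ((ih ((subset_insert p D).trans hDT) hp).trans (hT.chainJoins hδ hp hy)).mono
      subset_rfl ?_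
    exact insert_subset (Or.inr (mem_insert p _)) subset_union_left

end Chains

section LocallyConnected

def IsLocConnModulus (E : Type*) [PseudoMetricSpace E] (ε δ : ℝ) : Prop :=
  ∀ x y : E, dist x y < δ → ∃ S, IsPreconnected S ∧ x ∈ S ∧ y ∈ S ∧ S ⊆ ball x ε

variable {E : Type*} [PseudoMetricSpace E]

lemma exists_isLocConnModulus [CompactSpace E] [LocallyConnectedSpace E] {ε : ℝ} (hε : 0 < ε) :
    ∃ δ, 0 < δ ∧ δ ≤ ε ∧ IsLocConnModulus E ε δ := by
  obtain ⟨δ, hδ, hcover⟩ := lebesgue_number_lemma_of_metric isCompact_univ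
    (fun z : E => (isOpen_ball (x := z) (ε := ε / 2)).connectedComponentIn (x := z))
    (fun z _ => mem_iUnion.2 ⟨z, mem_connectedComponentIn (mem_ball_self (half_pos hε))⟩)
  refine ⟨min δ ε, lt_min hδ hε, min_le_right δ ε, fun x y hxy => ?_⟩
  obtain ⟨z, hz⟩ := hcover x (mem_univ x)
  have hxz : x ∈ connectedComponentIn (ball z (ε / 2)) z := hz (mem_ball_self hδ)
  refine ⟨_, isPreconnected_connectedComponentIn, hxz,
    hz (mem_ball'.2 (hxy.trans_le (min_le_left δ ε))), fun w hw => ?_⟩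
  have hw := connectedComponentIn_subset _ _ hw
  have hx := connectedComponentIn_subset _ _ hxz
  rw [mem_ball] at hw hx ⊢
  linarith [dist_triangle_right w x z]

lemma IsLocConnModulus.chainJoins {ε δ δ' : ℝ} (hmod : IsLocConnModulus E ε δ) (hδ' : 0 < δ')
    {x y : E} (hxy : dist x y < δ) {D : Set E} (hD : D.Finite) (hDx : ∀ p ∈ D, dist x p < δ) :
    ChainJoins δ' (ball x ε) D x y := by
  have hyD : ∀ p ∈ insert y D, dist x p < δ := forall_mem_insert.2 ⟨hxy, hDx⟩
  choose! S hS hxS hpS hSε using hmod x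
  set T := ⋃₀ (S '' insert y D)
  have hpT : ∀ p ∈ insert y D, p ∈ T := fun p hp =>
    mem_sUnion_of_mem (hpS p (hyD p hp)) (mem_image_of_mem S hp)
  have hT : IsPreconnected T :=
    isPreconnected_sUnion x _ (forall_mem_image.2 fun p hp => hxS p (hyD p hp))
      (forall_mem_image.2 fun p hp => hS p (hyD p hp))
  have hTε : T ⊆ ball x ε := sUnion_subset (forall_mem_image.2 fun p hp => hSε p (hyD p hp))
  have hxT : x ∈ T := mem_sUnion_of_mem (hxS y hxy) (mem_image_of_mem S (mem_insert y D))
  exact (hT.chainJoins_of_finite hδ' hD (fun p hp => hpT p (mem_insert_of_mem y hp)) hxT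
    (hpT y (mem_insert y D))).mono hTε subset_rfl

end LocallyConnected

section Refinement

variable {E : Type*} [PseudoMetricSpace E]

structure IsNetChain (δ : ℝ) (N : ℕ) (c : ℕ → E) : Prop extends IsDistChain δ N c where
  exists_dist_lt : ∀ q, ∃ j < N, dist q (c j) < δ

lemma IsNetChain.mono {δ δ' : ℝ} {N : ℕ} {c : ℕ → E} (hc : IsNetChain δ N c) (h : δ ≤ δ') :
    IsNetChain δ' N c :=
  ⟨⟨fun j => (hc.dist_lt j).trans_le h, hc.eq_of_le⟩, fun q =>
    let ⟨j, hj, hq⟩ := hc.exists_dist_lt q; ⟨j, hj, hq.trans_le h⟩⟩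

def Refines (ε : ℝ) (L : ℕ) (c c' : ℕ → E) : Prop :=
  ∀ i j, L * i ≤ j → j ≤ L * (i + 1) → dist (c' j) (c i) < ε

lemma IsNetChain.exists_refinement [CompactSpace E] {ε δ δ' : ℝ} (hε : 0 < ε) (hδ' : 0 < δ')
    (hmod : IsLocConnModulus E ε δ) {N : ℕ} {c : ℕ → E} (hc : IsNetChain δ N c) :
    ∃ L c', IsNetChain δ' (N * L) c' ∧ Refines ε L c c' := by
  obtain ⟨D, -, hD, hDnet⟩ := finite_cover_balls_of_compact (isCompact_univ (X := E)) hδ'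
  have hblock : ∀ i, ChainJoins δ' (ball (c i) ε) {p ∈ D | dist (c i) p < δ} (c i) (c (i + 1)) :=
    fun i => hmod.chainJoins hδ' (hc.dist_lt i) (hD.subset (sep_subset _ _)) fun p hp => hp.2
  choose m B hB hB0 hBm hBε hBD using hblock
  obtain ⟨L, hL, hmL⟩ : ∃ L, 0 < L ∧ ∀ i < N, m i < L :=
    ⟨(Finset.range N).sup m + 1, Nat.succ_pos _, fun i hi =>
      Nat.lt_succ_of_le (Finset.le_sup (Finset.mem_range.2 hi))⟩
  have hseg : ∀ i < N, ∀ r ≤ L, glue N L B (c N) (L * i + r) = B i r :=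
    fun i hi r hr => glue_add_of_le hL hB0 hc.eq_of_le
      (fun i hi => (hB i).eq_of_le L (hmL i hi).le ▸ hBm i) hi hr
  have htail : ∀ j, N * L ≤ j → glue N L B (c N) j = c N := fun j => glue_of_le
  generalize glue N L B (c N) = c' at hseg htail
  refine ⟨L, c', ⟨⟨fun j => ?_, fun j hj => ?_⟩, fun q => ?_⟩, fun i j hij hji => ?_⟩
  · rcases lt_or_ge (j / L) N with hi | hi
    · have hr := Nat.mod_lt j hL
      rw [← Nat.div_add_mod j L, add_assoc, hseg _ hi _ hr.le, hseg _ hi _ hr]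
      exact (hB _).dist_lt _
    · have hj : N * L ≤ j := (Nat.mul_le_mul_right L hi).trans (Nat.div_mul_le_self j L)
      rw [htail j hj, htail (j + 1) (hj.trans j.le_succ), dist_self]
      exact hδ'
  · rw [htail j hj, htail _ le_rfl]
  · obtain ⟨p, hpD, hqp⟩ := mem_iUnion₂.1 (hDnet (mem_univ q))
    obtain ⟨i, hi, hpi⟩ := hc.exists_dist_lt p
    obtain ⟨r, hr, rfl⟩ := (hB i).exists_le_eq_of_mem_range (hBD i ⟨hpD, by rwa [dist_comm]⟩)
    refine ⟨L * i + r, by nlinarith [hmL i hi], ?_⟩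
    rw [hseg i hi r (hr.trans (hmL i hi).le)]
    exact hqp
  · rcases lt_or_ge i N with hi | hi
    · obtain ⟨r, rfl⟩ := Nat.exists_eq_add_of_le hij
      rw [hseg i hi r (by rw [mul_add_one] at hji; omega)]
      exact hBε i (mem_range_self r)
    · rw [htail j ((show N * L ≤ L * i by rw [mul_comm]; exact Nat.mul_le_mul_left L hi).trans hij),
        hc.eq_of_le i hi, dist_self]
      exact hε

lemma exists_isNetChain [CompactSpace E] [ConnectedSpace E] {δ : ℝ} (hδ : 0 < δ) :
    ∃ N, ∃ c : ℕ → E, IsNetChain δ N c := by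
  obtain ⟨D, -, hD, hDnet⟩ := finite_cover_balls_of_compact (isCompact_univ (X := E)) hδ
  obtain ⟨x⟩ := ConnectedSpace.toNonempty (α := E)
  obtain ⟨m, f, hf, -, -, -, hDf⟩ := isPreconnected_univ.chainJoins_of_finite hδ hD
    (subset_univ D) (mem_univ x) (mem_univ x)
  refine ⟨m + 1, f, ⟨hf.mono m.le_succ, fun q => ?_⟩⟩
  obtain ⟨p, hpD, hqp⟩ := mem_iUnion₂.1 (hDnet (mem_univ q))
  obtain ⟨j, hj, rfl⟩ := hf.exists_le_eq_of_mem_range (hDf hpD)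
  exact ⟨j, Nat.lt_succ_of_le hj, hqp⟩

end Refinement

section Limit

lemma Nat.mul_floor_le_floor_mul {x : ℝ} (hx : 0 ≤ x) (L : ℕ) : L * ⌊x⌋₊ ≤ ⌊L * x⌋₊ :=
  Nat.le_floor (by push_cast; exact mul_le_mul_of_nonneg_left (Nat.floor_le hx) L.cast_nonneg)

lemma Nat.floor_mul_le_mul_floor_add_one (x : ℝ) (L : ℕ) : ⌊L * x⌋₊ ≤ L * (⌊x⌋₊ + 1) := by
  have h : (L : ℝ) * x ≤ ((L * (⌊x⌋₊ + 1) : ℕ) : ℝ) := by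
    push_cast
    exact mul_le_mul_of_nonneg_left (Nat.lt_floor_add_one x).le L.cast_nonneg
  exact (Nat.floor_le_floor h).trans_eq (Nat.floor_natCast _)

lemma exists_div_two_pow_lt (C : ℝ) {ε : ℝ} (hε : 0 < ε) : ∃ n : ℕ, C / 2 ^ n < ε := by
  obtain ⟨n, hn⟩ := pow_unbounded_of_one_lt (C / ε) one_lt_two
  exact ⟨n, by rwa [div_lt_iff₀ (by positivity), mul_comm, ← div_lt_iff₀ hε]⟩

variable {E : Type*}

def sample (N : ℕ) (c : ℕ → E) (t : ℝ) : E := c ⌊N * t⌋₊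

lemma sample_div_self {N : ℕ} (hN : 0 < N) (c : ℕ → E) (j : ℕ) : sample N c (j / N) = c j := by
  rw [sample, mul_div_cancel₀ _ (by positivity), Nat.floor_natCast]

variable [PseudoMetricSpace E]

lemma Refines.dist_sample_lt {ε : ℝ} {N L : ℕ} {c c' : ℕ → E} (h : Refines ε L c c') {t : ℝ}
    (ht : 0 ≤ t) : dist (sample (N * L) c' t) (sample N c t) < ε := by
  have hNt : 0 ≤ (N : ℝ) * t := by positivity
  unfold sample
  rw [Nat.cast_mul, mul_comm (N : ℝ), mul_assoc]
  exact h _ _ (Nat.mul_floor_le_floor_mul hNt L) (Nat.floor_mul_le_mul_floor_add_one _ L)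

lemma dist_sample_lt {ε : ℝ} {N : ℕ} {c : ℕ → E} (hc : ∀ j, dist (c j) (c (j + 1)) < ε)
    {s t : ℝ} (hs : 0 ≤ s) (ht : 0 ≤ t) (hst : |N * s - N * t| < 1) :
    dist (sample N c s) (sample N c t) < ε := by
  have hfloor : ∀ x y : ℝ, 0 ≤ y → x - y < 1 → ⌊x⌋₊ ≤ ⌊y⌋₊ + 1 := fun x y hy hxy => by
    rw [← Nat.floor_add_one hy]; exact Nat.floor_le_floor (by linarith)
  have h1 := hfloor (N * s) (N * t) (by positivity) (abs_lt.1 hst).2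
  have h2 := hfloor (N * t) (N * s) (by positivity) (by linarith [(abs_lt.1 hst).1])
  unfold sample
  rcases (by omega : ⌊N * s⌋₊ = ⌊N * t⌋₊ ∨ ⌊N * s⌋₊ = ⌊N * t⌋₊ + 1 ∨
    ⌊N * t⌋₊ = ⌊N * s⌋₊ + 1) with h | h | h
  · rw [h, dist_self]; exact dist_nonneg.trans_lt (hc 0)
  · rw [h, dist_comm]; exact hc _
  · rw [h]; exact hc _

lemma exists_uniform_limit_sample [CompleteSpace E] {N : ℕ → ℕ} {c : ℕ → ℕ → E}
    (hcc : ∀ n, ∃ L, N (n + 1) = N n * L ∧ Refines (1 / 2 ^ n) L (c n) (c (n + 1))) :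
    ∃ f : unitInterval → E,
      ∀ (t : unitInterval) n, dist (sample (N n) (c n) t) (f t) ≤ 2 / 2 ^ n := by
  have hg : ∀ (t : unitInterval) n,
      dist (sample (N n) (c n) t) (sample (N (n + 1)) (c (n + 1)) t) ≤ 2 / 2 / 2 ^ n := by
    intro t n
    obtain ⟨L, hN, hL⟩ := hcc n
    rw [dist_comm, div_self two_ne_zero, hN]
    exact (hL.dist_sample_lt t.2.1).le
  choose f hf using fun t => cauchySeq_tendsto_of_complete (cauchySeq_of_le_geometric_two (hg t))
  exact ⟨f, fun t => dist_le_of_le_geometric_two_of_tendsto (hg t) (hf t)⟩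

theorem exists_continuous_surjective_of_isNetChain {E : Type*} [MetricSpace E] [CompleteSpace E]
    [Nonempty E] {N : ℕ → ℕ} {c : ℕ → ℕ → E} (hc : ∀ n, IsNetChain (1 / 2 ^ n) (N n) (c n))
    (hcc : ∀ n, ∃ L, N (n + 1) = N n * L ∧ Refines (1 / 2 ^ n) L (c n) (c (n + 1))) :
    ∃ f : unitInterval → E, Continuous f ∧ Surjective f := by
  obtain ⟨f, hf⟩ := exists_uniform_limit_sample hcc
  have hN : ∀ n, (0 : ℝ) < N n := fun n => by
    obtain ⟨j, hj, -⟩ := (hc n).exists_dist_lt (Classical.arbitrary E)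
    exact_mod_cast hj.pos
  have hfc : Continuous f := by
    refine Metric.continuous_iff.2 fun t ε hε => ?_
    obtain ⟨n, hn⟩ := exists_div_two_pow_lt 5 hε
    refine ⟨1 / N n, by have := hN n; positivity, fun s hst => ?_⟩
    have hst' : |N n * (s : ℝ) - N n * t| < 1 := by
      rwa [← mul_sub, abs_mul, Nat.abs_cast, ← lt_div_iff₀' (hN n)]
    calc dist (f s) (f t) ≤ dist (f s) (sample (N n) (c n) s) +
          dist (sample (N n) (c n) s) (sample (N n) (c n) t) + dist (sample (N n) (c n) t) (f t) :=
          dist_triangle4 _ _ _ _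
      _ ≤ 2 / 2 ^ n + 1 / 2 ^ n + 2 / 2 ^ n := by
          rw [dist_comm (f s)]
          gcongr
          exacts [hf s n, (dist_sample_lt (hc n).dist_lt s.2.1 t.2.1 hst').le, hf t n]
      _ = 5 / 2 ^ n := by ring
      _ < ε := hn
  refine ⟨f, hfc, fun q => ?_⟩
  rw [← mem_range, ← (isCompact_range hfc).isClosed.closure_eq, Metric.mem_closure_iff]
  intro ε hε
  obtain ⟨n, hn⟩ := exists_div_two_pow_lt 3 hε
  obtain ⟨j, hj, hqj⟩ := (hc n).exists_dist_lt q
  let t : unitInterval :=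
    ⟨j / N n, by positivity, div_le_one_of_le₀ (by exact_mod_cast hj.le) (hN n).le⟩
  have hjt : sample (N n) (c n) t = c n j := sample_div_self (by exact_mod_cast hN n) (c n) j
  refine ⟨f t, mem_range_self t, ?_⟩
  calc dist q (f t) ≤ dist q (sample (N n) (c n) t) + dist (sample (N n) (c n) t) (f t) :=
        dist_triangle _ _ _
    _ < 1 / 2 ^ n + 2 / 2 ^ n := add_lt_add_of_lt_of_le (hjt ▸ hqj) (hf t n)
    _ = 3 / 2 ^ n := by ring
    _ < ε := hn

end Limit

lemma exists_seq_of_forall_exists {α : Type*} {P : ℕ → α → Prop} {R : ℕ → α → α → Prop} {a : α}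
    (ha : P 0 a) (h : ∀ n a, P n a → ∃ b, P (n + 1) b ∧ R n a b) :
    ∃ s : ℕ → α, ∀ n, P n (s n) ∧ R n (s n) (s (n + 1)) := by
  choose! F hF using h
  let s : ℕ → α := fun n => Nat.rec a F n
  have hs : ∀ n, P n (s n) := fun n => by
    induction n with
    | zero => exact ha
    | succ n ih => exact (hF n _ ih).1
  exact ⟨s, fun n => ⟨hs n, (hF n _ (hs n)).2⟩⟩

theorem exists_continuous_surjective_unitInterval {E : Type*} [MetricSpace E] [CompactSpace E]
    [ConnectedSpace E] [LocallyConnectedSpace E] :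
    ∃ f : unitInterval → E, Continuous f ∧ Surjective f := by
  choose δ hδ hδε hmod using fun n : ℕ =>
    exists_isLocConnModulus (E := E) (ε := 1 / 2 ^ n) (by positivity)
  obtain ⟨N₀, c₀, h₀⟩ := exists_isNetChain (E := E) (hδ 0)
  obtain ⟨s, hs⟩ := exists_seq_of_forall_exists
    (P := fun n (a : ℕ × (ℕ → E)) => IsNetChain (δ n) a.1 a.2)
    (R := fun n a b => ∃ L, b.1 = a.1 * L ∧ Refines (1 / 2 ^ n) L a.2 b.2) (a := (N₀, c₀)) h₀
    fun n a ha =>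
      let ⟨L, c', hc', hL⟩ := ha.exists_refinement (by positivity) (hδ (n + 1)) (hmod n)
      ⟨(a.1 * L, c'), hc', L, rfl, hL⟩
  exact exists_continuous_surjective_of_isNetChain (fun n => (hs n).1.mono (hδε n))
    fun n => (hs n).2
section PeanoImage

variable {Y : Type*} [TopologicalSpace Y]

lemma exists_continuousOn_image_Icc_iff (X : Set Y) :
    (∃ f : ℝ → Y, ContinuousOn f (Icc 0 1) ∧ X = f '' Icc 0 1) ↔
      ∃ γ : unitInterval → X, Continuous γ ∧ Surjective γ := by
  constructor
  · rintro ⟨f, hf, rfl⟩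
    refine ⟨fun t => ⟨f t, mem_image_of_mem f t.2⟩, hf.domRestrict.subtype_mk _, ?_⟩
    rintro ⟨_, t, ht, rfl⟩
    exact ⟨⟨t, ht⟩, rfl⟩
  · rintro ⟨γ, hγ, hsurj⟩
    refine ⟨fun t => (IccExtend (zero_le_one (α := ℝ)) γ t).1,
      (continuous_subtype_val.comp hγ.Icc_extend').continuousOn, ?_⟩
    refine Subset.antisymm (fun z hz => ?_) (image_subset_iff.2 fun t _ => (IccExtend _ γ t).2)
    obtain ⟨t, ht⟩ := hsurj ⟨z, hz⟩
    exact ⟨t, t.2, by simp [ht]⟩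

lemma exists_continuous_image_Icc_eq {X : Set Y} {γ : unitInterval → X} (hγ : Continuous γ)
    (hsurj : Surjective γ) {a b : Y} (ha : a ∈ X) (hb : b ∈ X) :
    ∃ G : ℝ → Y, Continuous G ∧ G 0 = a ∧ G 1 = b ∧ G '' Icc 0 1 = X := by
  have : PathConnectedSpace unitInterval := isPathConnected_iff_pathConnectedSpace.1
    ((convex_Icc (0 : ℝ) 1).isPathConnected (nonempty_Icc.2 zero_le_one))
  have := hsurj.pathConnectedSpace hγ
  let P : Path (γ 0) (γ 1) := ⟨⟨γ, hγ⟩, rfl, rfl⟩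
  let Γ := ((PathConnectedSpace.somePath ⟨a, ha⟩ (γ 0)).trans P).trans
    (PathConnectedSpace.somePath (γ 1) ⟨b, hb⟩)
  have hΓ : Surjective Γ := by
    rw [← range_eq_univ, Path.trans_range, Path.trans_range]
    exact eq_univ_of_forall fun y => Or.inl (Or.inr (hsurj y))
  refine ⟨fun t => Γ.extend t, continuous_subtype_val.comp Γ.continuous_extend, by simp, by simp,
    Subset.antisymm (image_subset_iff.2 fun t _ => (Γ.extend t).2) fun z hz => ?_⟩
  obtain ⟨t, ht⟩ := hΓ ⟨z, hz⟩
  exact ⟨t, t.2, by simp [ht]⟩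

lemma locallyConnectedSpace_of_surjective {Z : Type*} [TopologicalSpace Z] [CompactSpace Y]
    [LocallyConnectedSpace Y] [T2Space Z] {f : Y → Z} (hf : Continuous f) (hsurj : Surjective f) :
    LocallyConnectedSpace Z :=
  (hf.isClosedMap.isQuotientMap hf hsurj).isCoinducing.locallyConnectedSpace

end PeanoImage

section ConcatReflect

variable {Y : Type*}

def concatReflect (σ : Y → Y) (G : ℝ → Y) (t : ℝ) : Y :=
  if t ≤ 1 / 2 then G (2 * t) else σ (G (2 - 2 * t))

variable {σ : Y → Y} {G : ℝ → Y}

lemma continuous_concatReflect [TopologicalSpace Y] (hσ : Continuous σ) (hG : Continuous G)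
    (hfix : σ (G 1) = G 1) :
    Continuous (concatReflect σ G) :=
  Continuous.if_le (by fun_prop) (by fun_prop) continuous_id continuous_const fun t ht => by
    rw [ht]; norm_num; exact hfix.symm

lemma concatReflect_one_sub (hσ : Involutive σ) (hfix : σ (G 1) = G 1) (t : ℝ) :
    concatReflect σ G (1 - t) = σ (concatReflect σ G t) := by
  unfold concatReflect
  by_cases ht : t ≤ 1 / 2
  · by_cases ht' : 1 - t ≤ 1 / 2
    · obtain rfl : t = 1 / 2 := by linarith
      norm_num [hfix]
    · rw [if_neg ht', if_pos ht]; ring_nf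
  · rw [if_pos (by linarith), if_neg ht, hσ]; ring_nf

lemma image_concatReflect (hσ : Involutive σ) (hfix : σ (G 1) = G 1) :
    concatReflect σ G '' Icc 0 1 = G '' Icc 0 1 ∪ σ '' (G '' Icc 0 1) := by
  refine Subset.antisymm ?_ (union_subset ?_ ?_)
  · rintro _ ⟨t, ⟨ht0, ht1⟩, rfl⟩
    unfold concatReflect
    split_ifs with ht
    · exact Or.inl ⟨2 * t, ⟨by linarith, by linarith⟩, rfl⟩
    · exact Or.inr ⟨_, ⟨2 - 2 * t, ⟨by linarith, by linarith⟩, rfl⟩, rfl⟩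
  · rintro _ ⟨s, ⟨hs0, hs1⟩, rfl⟩
    refine ⟨s / 2, ⟨by linarith, by linarith⟩, ?_⟩
    rw [concatReflect, if_pos (by linarith), mul_div_cancel₀ s two_ne_zero]
  · rintro _ ⟨_, ⟨s, ⟨hs0, hs1⟩, rfl⟩, rfl⟩
    refine ⟨1 - s / 2, ⟨by linarith, by linarith⟩, ?_⟩
    rw [concatReflect_one_sub hσ hfix, concatReflect, if_pos (by linarith),
      mul_div_cancel₀ s two_ne_zero]

end ConcatReflect

section Reflection

open ComplexConjugate

def reflect (α : ℝ) (z : ℂ) : ℂ := 2 * α - conj z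

lemma reflect_involutive (α : ℝ) : Involutive (reflect α) := fun z => by
  simp [reflect, map_ofNat]

lemma continuous_reflect (α : ℝ) : Continuous (reflect α) :=
  continuous_const.sub Complex.continuous_conj

lemma reflect_eq_self {α : ℝ} {z : ℂ} (h : z.re = α) : reflect α z = z := by
  apply Complex.ext
  · simp [reflect, h]; ring
  · simp [reflect]

lemma memF0_of_reflect {α : ℝ} {F : ℝ → ℂ} (hF : ContinuousOn F (Icc 0 1)) (hF0 : F 0 = 0)
    (hFα : ∀ t, F (1 - t) = reflect α (F t)) : memF0 F := by
  refine ⟨hF, hF0, fun t _ => ?_⟩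
  have h1 : F 1 = 2 * α := by simpa [hF0, reflect] using hFα 0
  rw [hFα, h1, reflect]
  simp [map_ofNat]

lemma memF0.exists_reflect {f : ℝ → ℂ} (hf : memF0 f) :
    ∃ α : ℝ, ∀ t ∈ Icc (0 : ℝ) 1, f (1 - t) = reflect α (f t) := by
  obtain ⟨-, -, hsym⟩ := hf
  have hreal : conj (f 1) = f 1 := by
    have := hsym (1 / 2) (by norm_num)
    rw [show (1 : ℝ) - 1 / 2 = 1 / 2 by norm_num] at this
    rw [← this, map_add, Complex.conj_conj, add_comm]
  refine ⟨(f 1).re / 2, fun t ht => ?_⟩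
  have h2α : (2 * ((f 1).re / 2 : ℝ) : ℂ) = f 1 := by
    push_cast
    rw [mul_div_cancel₀ _ two_ne_zero, Complex.conj_eq_iff_re.1 hreal]
  have := congrArg conj (hsym t ht)
  rw [map_add, Complex.conj_conj, hreal] at this
  rw [reflect, h2α, ← this]
  ring

lemma memF0.reflect_image_eq {f : ℝ → ℂ} (hf : memF0 f) :
    ∃ α : ℝ, reflect α '' (f '' Icc 0 1) = f '' Icc 0 1 := by
  obtain ⟨α, hα⟩ := hf.exists_reflect
  refine ⟨α, ?_⟩
  calc reflect α '' (f '' Icc 0 1) = f '' ((fun t => 1 - t) '' Icc 0 1) := by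
        rw [image_image, image_image]
        exact (EqOn.image_eq fun t ht => (hα t ht).symm)
    _ = f '' Icc 0 1 := by rw [image_const_sub_Icc, sub_zero, sub_self]

lemma exists_re_eq_of_reflect_image_eq {X : Set ℂ} (hX : IsPreconnected X) (h0 : (0 : ℂ) ∈ X)
    {α : ℝ} (hα : reflect α '' X = X) : ∃ p ∈ X, p.re = α := by
  have h2α : reflect α 0 ∈ X := hα ▸ mem_image_of_mem _ h0
  have hre : uIcc (0 : ℝ) (2 * α) ⊆ Complex.re '' X :=
    (hX.image _ Complex.continuous_re.continuousOn).ordConnected.uIcc_subset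
      (mem_image_of_mem _ h0) (by simpa [reflect] using mem_image_of_mem Complex.re h2α)
  exact hre (mem_uIcc.2 ((le_total 0 α).imp (fun h => ⟨h, by linarith⟩) fun h => ⟨by linarith, h⟩))

lemma exists_memF0_image_eq {X : Set ℂ} (h0 : (0 : ℂ) ∈ X) {α : ℝ} (hα : reflect α '' X = X)
    {γ : unitInterval → X} (hγ : Continuous γ) (hsurj : Surjective γ) :
    ∃ F : ℝ → ℂ, memF0 F ∧ X = F '' Icc 0 1 := by
  have hX : IsPreconnected X := by
    simpa [hsurj.range_comp] using isPreconnected_range (continuous_subtype_val.comp hγ)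
  obtain ⟨p, hp, hpα⟩ := exists_re_eq_of_reflect_image_eq hX h0 hα
  obtain ⟨G, hG, hG0, hG1, hGX⟩ := exists_continuous_image_Icc_eq hγ hsurj h0 hp
  have hfix : reflect α (G 1) = G 1 := hG1 ▸ reflect_eq_self hpα
  refine ⟨concatReflect (reflect α) G, memF0_of_reflect
    (continuous_concatReflect (continuous_reflect α) hG hfix).continuousOn
    (by simp [concatReflect, hG0]) (concatReflect_one_sub (reflect_involutive α) hfix), ?_⟩
  rw [image_concatReflect (reflect_involutive α) hfix, hGX, hα, union_self]

end Reflection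

theorem stmt_9_general (X : Set ℂ) (hX : IsCompact X) :
    ((∃ f : ℝ → ℂ, memF0 f ∧ X = f '' Set.Icc 0 1) ↔
      ((0 : ℂ) ∈ X ∧ (∃ α : ℝ, (fun z => 2 * (α : ℂ) - (starRingEnd ℂ) z) '' X = X) ∧
        ∃ f : ℝ → ℂ, ContinuousOn f (Set.Icc 0 1) ∧ X = f '' Set.Icc 0 1)) ∧
    (((0 : ℂ) ∈ X ∧ (∃ α : ℝ, (fun z => 2 * (α : ℂ) - (starRingEnd ℂ) z) '' X = X) ∧
        ∃ f : ℝ → ℂ, ContinuousOn f (Set.Icc 0 1) ∧ X = f '' Set.Icc 0 1) ↔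
      ((0 : ℂ) ∈ X ∧ (∃ α : ℝ, (fun z => 2 * (α : ℂ) - (starRingEnd ℂ) z) '' X = X) ∧
        IsConnected X ∧ LocallyConnectedSpace X)) := by
  simp only [exists_continuousOn_image_Icc_iff]
  refine ⟨⟨?_, ?_⟩, and_congr_right' (and_congr_right' ⟨?_, ?_⟩)⟩
  · rintro ⟨f, hf, rfl⟩
    exact ⟨⟨0, ⟨le_rfl, zero_le_one⟩, hf.2.1⟩, hf.reflect_image_eq,
      (exists_continuousOn_image_Icc_iff _).1 ⟨f, hf.1, rfl⟩⟩
  · rintro ⟨h0, ⟨α, hα⟩, γ, hγ, hsurj⟩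
    exact exists_memF0_image_eq h0 hα hγ hsurj
  · rintro ⟨γ, hγ, hsurj⟩
    have : LocallyPathConnectedSpace unitInterval :=
      (convex_Icc (0 : ℝ) 1).locallyPathConnectedSpace
    exact ⟨isConnected_iff_connectedSpace.2 (hsurj.connectedSpace hγ),
      locallyConnectedSpace_of_surjective hγ hsurj⟩
  · rintro ⟨hconn, _⟩
    have := isCompact_iff_compactSpace.1 hX
    have := isConnected_iff_connectedSpace.1 hconn
    exact exists_continuous_surjective_unitInterval

/-- Characterization of images of functions in F₀: for a nonempty compact X ⊆ ℂ, the
following are equivalent: (1) X is the image of [0,1] under some f ∈ F₀; (2) 0 ∈ X, X is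
symmetric with respect to some vertical line Re(z) = α, and X is the image of [0,1] under
some continuous function; (3) 0 ∈ X, X is symmetric with respect to some vertical line, and
X is connected and locally connected. -/
theorem stmt_9 (X : Set ℂ) (hX : IsCompact X) (hne : X.Nonempty) :
    ((∃ f : ℝ → ℂ, memF0 f ∧ X = f '' Set.Icc 0 1) ↔
      ((0 : ℂ) ∈ X ∧ (∃ α : ℝ, (fun z => 2 * (α : ℂ) - (starRingEnd ℂ) z) '' X = X) ∧
        ∃ f : ℝ → ℂ, ContinuousOn f (Set.Icc 0 1) ∧ X = f '' Set.Icc 0 1)) ∧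
    (((0 : ℂ) ∈ X ∧ (∃ α : ℝ, (fun z => 2 * (α : ℂ) - (starRingEnd ℂ) z) '' X = X) ∧
        ∃ f : ℝ → ℂ, ContinuousOn f (Set.Icc 0 1) ∧ X = f '' Set.Icc 0 1) ↔
      ((0 : ℂ) ∈ X ∧ (∃ α : ℝ, (fun z => 2 * (α : ℂ) - (starRingEnd ℂ) z) '' X = X) ∧
        IsConnected X ∧ LocallyConnectedSpace X)) :=
  stmt_9_general X hX

end
end

section
/- Let α be a real number and define f : [0,1] → ℂ by f(t) = iα·t(1−t). Then f belongs to S if and only if |α| ≤ 2π. -/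
noncomputable section
open MeasureTheory Set

/-!
Since `t(1 - t) = B₀(t)/6 - B₂(t)` with `Bₖ` the Bernoulli polynomials, whose Fourier coefficients
on `[0, 1]` are known, `t(1 - t)` has `h`-th coefficient `-1/(2π²h²)` for `h ≠ 0`. As `f(1) = 0`
we have `g = f`, so `ĝ(h) = -iα/(2π²h²)` is purely imaginary, and `|ĝ(h)| ≤ 1/(π|h|)` amounts to
`|α| ≤ 2π|h|`, which is sharpest at `|h| = 1`.
-/

open Complex Real

lemma continuous_e_mul (c : ℂ) : Continuous fun t : ℝ => e (c * t) := by
  unfold e; fun_prop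

lemma fourierCoeff01_eq_fourierCoeffOn (f : ℝ → ℂ) (n : ℤ) :
    fourierCoeff01 f n = fourierCoeffOn zero_lt_one f n := by
  rw [fourierCoeffOn_eq_integral, fourierCoeff01]
  simp only [sub_zero, div_one, one_smul, fourier_coe_apply, smul_eq_mul, e]
  refine intervalIntegral.integral_congr fun t _ => ?_
  push_cast
  ring_nf

lemma fourierCoeff01_const_mul (c : ℂ) (f : ℝ → ℂ) (n : ℤ) :
    fourierCoeff01 (fun t => c * f t) n = c * fourierCoeff01 f n := by
  simp only [fourierCoeff01, mul_assoc, intervalIntegral.integral_const_mul]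

lemma fourierCoeff01_sub {f g : ℝ → ℂ} (hf : Continuous f) (hg : Continuous g) (n : ℤ) :
    fourierCoeff01 (fun t => f t - g t) n = fourierCoeff01 f n - fourierCoeff01 g n := by
  simp only [fourierCoeff01, sub_mul]
  exact intervalIntegral.integral_sub ((hf.mul (continuous_e_mul _)).intervalIntegrable _ _)
    ((hg.mul (continuous_e_mul _)).intervalIntegrable _ _)

lemma fourierCoeff01_bernoulliFun {k : ℕ} (hk : k ≠ 0) (n : ℤ) :
    fourierCoeff01 (fun t => bernoulliFun k t) n = -(k.factorial : ℂ) / (2 * π * I * n) ^ k := by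
  rw [fourierCoeff01_eq_fourierCoeffOn, ← bernoulliFourierCoeff_eq hk]
  rfl

lemma fourierCoeff01_one {n : ℤ} (hn : n ≠ 0) : fourierCoeff01 (fun _ => 1) n = 0 := by
  simpa [bernoulliFourierCoeff, fourierCoeff01_eq_fourierCoeffOn, bernoulliFun_zero] using
    bernoulli_zero_fourier_coeff hn

lemma fourierCoeff01_mul_one_sub {n : ℤ} (hn : n ≠ 0) :
    fourierCoeff01 (fun t => (t : ℂ) * (1 - t)) n = -1 / (2 * π ^ 2 * n ^ 2) := by
  have hB : (fun t : ℝ => (t : ℂ) * (1 - t)) = fun t => 6⁻¹ * 1 - (bernoulliFun 2 t : ℂ) := by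
    funext t
    simp only [bernoulliFun_two]
    push_cast
    ring
  rw [hB, fourierCoeff01_sub continuous_const (by fun_prop), fourierCoeff01_const_mul,
    fourierCoeff01_one hn, fourierCoeff01_bernoulliFun two_ne_zero]
  have : (n : ℂ) ≠ 0 := by exact_mod_cast hn
  field_simp
  norm_num [I_sq]

lemma fourierCoeff01_I_mul_mul_one_sub (α : ℝ) {n : ℤ} (hn : n ≠ 0) :
    fourierCoeff01 (fun t : ℝ => I * α * (t * (1 - t))) n
      = ((-α / (2 * π ^ 2 * n ^ 2) : ℝ) : ℂ) * I := by
  rw [fourierCoeff01_const_mul, fourierCoeff01_mul_one_sub hn]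
  push_cast
  ring

lemma div_two_pi_sq_mul_sq_le_iff (a : ℝ) {x : ℝ} (hx : x ≠ 0) :
    a / (2 * π ^ 2 * x ^ 2) ≤ 1 / (π * |x|) ↔ a ≤ 2 * π * |x| := by
  have hx' : 0 < |x| := abs_pos.mpr hx
  rw [← sq_abs x, div_le_div_iff₀ (by positivity) (by positivity)]
  constructor <;> intro h <;> nlinarith [pi_pos, mul_pos pi_pos hx']

lemma le_two_pi_mul_abs_int_iff (a : ℝ) :
    (∀ n : ℤ, n ≠ 0 → a ≤ 2 * π * |(n : ℝ)|) ↔ a ≤ 2 * π := by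
  refine ⟨fun h => by simpa using h 1 one_ne_zero, fun h n hn => ?_⟩
  have : (1 : ℝ) ≤ |(n : ℝ)| := by exact_mod_cast Int.one_le_abs hn
  nlinarith [pi_pos]

/-- The function f(t) = iα·t(1-t) belongs to S if and only if |α| ≤ 2π. -/
theorem stmt_14 (α : ℝ) :
    memS (fun t : ℝ => Complex.I * (α : ℂ) * (t : ℂ) * (1 - (t : ℂ))) ↔ |α| ≤ 2 * Real.pi := by
  have hg : (fun t : ℝ => I * α * t * (1 - t) - t * (I * α * (1 : ℝ) * (1 - (1 : ℝ))))
      = fun t : ℝ => I * α * (t * (1 - t)) := by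
    funext t
    push_cast
    ring
  have hcoeff : ∀ n : ℤ, n ≠ 0 →
      (((fourierCoeff01 (fun t : ℝ => I * α * (t * (1 - t))) n).re = 0 ∧
        ‖fourierCoeff01 (fun t : ℝ => I * α * (t * (1 - t))) n‖ ≤ 1 / (π * |(n : ℝ)|)) ↔
      |α| ≤ 2 * π * |(n : ℝ)|) := fun n hn => by
    rw [fourierCoeff01_I_mul_mul_one_sub α hn, re_ofReal_mul, I_re, mul_zero, norm_mul, norm_I,
      mul_one, norm_real, norm_div, norm_neg, Real.norm_eq_abs,
      Real.norm_of_nonneg (by positivity), div_two_pi_sq_mul_sq_le_iff _ (by exact_mod_cast hn)]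
    exact and_iff_right rfl
  simp only [memS, hg]
  rw [← le_two_pi_mul_abs_int_iff]
  exact ⟨fun h n hn => (hcoeff n hn).1 (h.2.2.2.2 n hn),
    fun h => ⟨by fun_prop, by simp, by simp, by simp, fun n hn => (hcoeff n hn).2 (h n hn)⟩⟩

end
end

section
/- Let f ∈ F₀ be such that f(1) is a real number in [−2,2] and the function g(t) = f(t) − t·f(1) has total variation at most 2 on [0,1]. Then f belongs to S. -/
noncomputable section
open MeasureTheory Set

/-!
Reflecting `t ↦ 1 - t` and conjugating turns `ĝ(h)` into its complex conjugate, while the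
symmetry of `f ∈ F₀` (with `f(1)` real) makes `g` anti-invariant under this operation; hence `ĝ(h)`
is purely imaginary.

For the bound, `ĝ(h) = ∫ g φ'` with `φ(t) = e(-ht)/(-2πih)`. On a fine partition, Abel summation
rewrites `∫ g φ'` as boundary terms, which vanish since `g(0) = g(1) = 0`, minus
`∑ (g(uₖ₊₁) - g(uₖ)) φ(uₖ)`, up to an error that uniform continuity of `g` makes arbitrarily small.
So `|ĝ(h)| ≤ Var(g) · sup |φ| = Var(g) / (2π|h|) ≤ 1/(π|h|)`.
-/

open scoped ComplexConjugate
open Finset (range)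

theorem BoundedVariationOn.sum_dist_le {α E : Type*} [LinearOrder α] [PseudoMetricSpace E]
    {f : α → E} {s : Set α} (hf : BoundedVariationOn f s) {n : ℕ} {u : ℕ → α}
    (hu : Monotone u) (us : ∀ i, u i ∈ s) :
    ∑ i ∈ range n, dist (f (u (i + 1))) (f (u i)) ≤ (eVariationOn f s).toReal := by
  simp only [dist_edist]
  rw [← ENNReal.toReal_sum fun i _ => edist_ne_top _ _]
  exact ENNReal.toReal_mono hf (eVariationOn.sum_le hu us)

theorem exists_partition_dist_le {E : Type*} [PseudoMetricSpace E] {g : ℝ → E} {a b : ℝ}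
    (hab : a ≤ b) (hg : ContinuousOn g (Icc a b)) {ε : ℝ} (hε : 0 < ε) :
    ∃ (N : ℕ) (u : ℕ → ℝ), Monotone u ∧ u 0 = a ∧ u N = b ∧ (∀ k, u k ∈ Icc a b) ∧
      ∀ k < N, ∀ t ∈ Icc (u k) (u (k + 1)), dist (g t) (g (u (k + 1))) ≤ ε := by
  obtain ⟨δ, hδ, hgδ⟩ := Metric.uniformContinuousOn_iff_le.1
    (isCompact_Icc.uniformContinuousOn_of_continuous hg) ε hε
  obtain ⟨N, hN⟩ := exists_nat_gt ((b - a) / δ)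
  have hN0 : (0 : ℝ) < N := (div_nonneg (sub_nonneg.2 hab) hδ.le).trans_lt hN
  have hmesh : (b - a) / N ≤ δ := by
    rw [div_lt_iff₀ hδ] at hN
    rw [div_le_iff₀ hN0]
    linarith
  set u : ℕ → ℝ := fun k => a + (min k N : ℕ) * ((b - a) / N)
  have hstep : 0 ≤ (b - a) / N := div_nonneg (sub_nonneg.2 hab) hN0.le
  have hu : Monotone u := fun i j hij => by
    simp only [u]
    gcongr
  have hu_ge : ∀ k, a ≤ u k := fun k => le_add_of_nonneg_right (by positivity)
  have huN : u N = b := by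
    simp only [u, min_self]
    field_simp
    ring
  have hu_le : ∀ k, u k ≤ b := fun k => huN ▸ by
    simp only [u, min_self]
    gcongr
    exact min_le_right k N
  have hgap : ∀ k < N, u (k + 1) - u k = (b - a) / N := fun k hk => by
    simp only [u, min_eq_left hk.le, min_eq_left (Nat.succ_le_of_lt hk)]
    push_cast
    ring
  refine ⟨N, u, hu, by simp [u], huN, fun k => ⟨hu_ge k, hu_le k⟩,
    fun k hk t ht => hgδ _ ⟨(hu_ge k).trans ht.1, ht.2.trans (hu_le _)⟩ _ ⟨hu_ge _, hu_le _⟩ ?_⟩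
  rw [Real.dist_eq, abs_of_nonpos (sub_nonpos.2 ht.2)]
  linarith [ht.1, hgap k hk]

section IntegrationByParts

variable {g φ φ' : ℝ → ℂ} {u : ℕ → ℝ} {N : ℕ}

theorem integral_mul_deriv_sub_eq_sum (hu : Monotone u) (hg : ContinuousOn g (Icc (u 0) (u N)))
    (hφ : ∀ t ∈ Icc (u 0) (u N), HasDerivAt φ (φ' t) t)
    (hφ' : ContinuousOn φ' (Icc (u 0) (u N))) :
    (∫ t in u 0..u N, g t * φ' t) - (g (u N) * φ (u N) - g (u 0) * φ (u 0)) =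
      ∑ k ∈ range N, (∫ t in u k..u (k + 1), (g t - g (u (k + 1))) * φ' t) -
        ∑ k ∈ range N, (g (u (k + 1)) - g (u k)) * φ (u k) := by
  have hsub : ∀ k < N, uIcc (u k) (u (k + 1)) ⊆ Icc (u 0) (u N) := fun k hk => by
    rw [uIcc_of_le (hu k.le_succ)]
    exact Icc_subset_Icc (hu k.zero_le) (hu hk)
  have hpiece : ∀ k < N, ∫ t in u k..u (k + 1), g t * φ' t =
      (∫ t in u k..u (k + 1), (g t - g (u (k + 1))) * φ' t) +
        g (u (k + 1)) * (φ (u (k + 1)) - φ (u k)) := fun k hk => by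
    have hφ'k := hφ'.mono (hsub k hk)
    rw [← intervalIntegral.integral_eq_sub_of_hasDerivAt (fun t ht => hφ t (hsub k hk ht))
        hφ'k.intervalIntegrable, ← intervalIntegral.integral_const_mul,
      ← intervalIntegral.integral_add (f := fun t => (g t - g (u (k + 1))) * φ' t)
        (g := fun t => g (u (k + 1)) * φ' t)
        (((hg.mono (hsub k hk)).sub continuousOn_const).mul hφ'k).intervalIntegrable
        (continuousOn_const.mul hφ'k).intervalIntegrable]
    congr 1 with t
    ring
  have htelescope := Finset.sum_range_sub (fun k => g (u k) * φ (u k)) N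
  rw [← intervalIntegral.sum_integral_adjacent_intervals (f := fun t => g t * φ' t) fun k hk =>
      ((hg.mono (hsub k hk)).mul (hφ'.mono (hsub k hk))).intervalIntegrable,
    Finset.sum_congr rfl fun k hk => hpiece k (Finset.mem_range.1 hk), Finset.sum_add_distrib,
    ← htelescope, add_sub_assoc, ← Finset.sum_sub_distrib, sub_eq_add_neg,
    ← Finset.sum_neg_distrib]
  congr 1
  refine Finset.sum_congr rfl fun k _ => ?_
  ring

theorem norm_integral_mul_deriv_sub_le_of_partition (hu : Monotone u)
    (hmem : ∀ k, u k ∈ Icc (u 0) (u N)) (hg : ContinuousOn g (Icc (u 0) (u N)))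
    (hbv : BoundedVariationOn g (Icc (u 0) (u N)))
    (hφ : ∀ t ∈ Icc (u 0) (u N), HasDerivAt φ (φ' t) t)
    (hφ' : ContinuousOn φ' (Icc (u 0) (u N))) {M ε : ℝ} (hM : ∀ t ∈ Icc (u 0) (u N), ‖φ t‖ ≤ M)
    (hosc : ∀ k < N, ∀ t ∈ Icc (u k) (u (k + 1)), ‖g t - g (u (k + 1))‖ ≤ ε) :
    ‖(∫ t in u 0..u N, g t * φ' t) - (g (u N) * φ (u N) - g (u 0) * φ (u 0))‖ ≤
      (eVariationOn g (Icc (u 0) (u N))).toReal * M + ε * ∫ t in u 0..u N, ‖φ' t‖ := by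
  have hsub : ∀ k < N, uIcc (u k) (u (k + 1)) ⊆ Icc (u 0) (u N) := fun k hk => by
    rw [uIcc_of_le (hu k.le_succ)]
    exact Icc_subset_Icc (hmem k).1 (hmem (k + 1)).2
  have hM0 : 0 ≤ M := (norm_nonneg _).trans (hM _ (hmem 0))
  have hoscillation : ‖∑ k ∈ range N, ∫ t in u k..u (k + 1), (g t - g (u (k + 1))) * φ' t‖ ≤
      ε * ∫ t in u 0..u N, ‖φ' t‖ := by
    have hint : ∀ k < N, IntervalIntegrable (fun t => ε * ‖φ' t‖) volume (u k) (u (k + 1)) :=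
      fun k hk => (continuousOn_const.mul (hφ'.mono (hsub k hk)).norm).intervalIntegrable
    rw [← intervalIntegral.integral_const_mul,
      ← intervalIntegral.sum_integral_adjacent_intervals hint]
    refine (norm_sum_le _ _).trans (Finset.sum_le_sum fun k hk => ?_)
    have hk := Finset.mem_range.1 hk
    refine intervalIntegral.norm_integral_le_of_norm_le (hu k.le_succ)
      (ae_of_all _ fun t ht => ?_) (hint k hk)
    rw [norm_mul]
    exact mul_le_mul_of_nonneg_right (hosc k hk t (Ioc_subset_Icc_self ht)) (norm_nonneg _)
  have hvariation : ‖∑ k ∈ range N, (g (u (k + 1)) - g (u k)) * φ (u k)‖ ≤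
      (eVariationOn g (Icc (u 0) (u N))).toReal * M :=
    calc _ ≤ ∑ k ∈ range N, dist (g (u (k + 1))) (g (u k)) * M := by
          refine (norm_sum_le _ _).trans (Finset.sum_le_sum fun k _ => ?_)
          rw [norm_mul, dist_eq_norm]
          exact mul_le_mul_of_nonneg_left (hM _ (hmem k)) (norm_nonneg _)
      _ ≤ _ := by
          rw [← Finset.sum_mul]
          exact mul_le_mul_of_nonneg_right (hbv.sum_dist_le hu hmem) hM0
  rw [integral_mul_deriv_sub_eq_sum hu hg hφ hφ', add_comm]
  exact (norm_sub_le _ _).trans (add_le_add hoscillation hvariation)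

theorem norm_integral_mul_deriv_sub_le {a b M : ℝ} (hab : a ≤ b) (hg : ContinuousOn g (Icc a b))
    (hbv : BoundedVariationOn g (Icc a b)) (hφ : ∀ t ∈ Icc a b, HasDerivAt φ (φ' t) t)
    (hφ' : ContinuousOn φ' (Icc a b)) (hM : ∀ t ∈ Icc a b, ‖φ t‖ ≤ M) :
    ‖(∫ t in a..b, g t * φ' t) - (g b * φ b - g a * φ a)‖ ≤
      (eVariationOn g (Icc a b)).toReal * M := by
  set C := ∫ t in a..b, ‖φ' t‖
  have hC : 0 ≤ C := intervalIntegral.integral_nonneg hab fun t _ => norm_nonneg _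
  refine le_of_forall_pos_le_add fun ε hε => ?_
  obtain ⟨N, u, hu, rfl, rfl, hmem, hosc⟩ :=
    exists_partition_dist_le hab hg (div_pos hε (by positivity : 0 < C + 1))
  refine (norm_integral_mul_deriv_sub_le_of_partition hu hmem hg hbv hφ hφ' hM
    fun k hk t ht => by simpa only [dist_eq_norm] using hosc k hk t ht).trans ?_
  gcongr
  calc ε / (C + 1) * C ≤ ε / (C + 1) * (C + 1) := by gcongr; linarith
    _ = ε := div_mul_cancel₀ ε (by positivity)

end IntegrationByParts

section Fourier

open Complex

theorem hasDerivAt_e_mul (x : ℂ) (t : ℝ) :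
    HasDerivAt (fun t : ℝ => e (x * t)) (e (x * t) * (2 * Real.pi * I * x)) t := by
  have := (((hasDerivAt_id t).ofReal_comp).const_mul (2 * Real.pi * I * x)).cexp
  simpa only [e, id, ofReal_one, mul_one, mul_assoc] using this

theorem norm_e_eq_one {z : ℂ} (hz : z.im = 0) : ‖e z‖ = 1 := by
  rw [e, norm_exp]
  simp [hz]

theorem e_add (z w : ℂ) : e (z + w) = e z * e w := by
  rw [e, e, e, mul_add, exp_add]

theorem e_intCast (n : ℤ) : e n = 1 := by
  rw [e, mul_comm]
  exact exp_int_mul_two_pi_mul_I n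

theorem conj_e (z : ℂ) : conj (e z) = e (-conj z) := by
  rw [e, e, ← exp_conj]
  simp [conj_ofNat]

theorem fourierCoeff01_conj_comp_one_sub (g : ℝ → ℂ) (h : ℤ) :
    fourierCoeff01 (fun t => conj (g (1 - t))) h = conj (fourierCoeff01 g h) := by
  have hreflect := intervalIntegral.integral_comp_sub_left
    (fun t => conj (g t * e (-(h : ℂ) * t))) (a := 0) (b := 1) 1
  rw [sub_self, sub_zero] at hreflect
  rw [fourierCoeff01, fourierCoeff01, ← intervalIntegral.intervalIntegral_conj, ← hreflect]
  congr 1 with t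
  have hexponent : -conj (-(h : ℂ) * ((1 - t : ℝ) : ℂ)) = h + -(h : ℂ) * t := by
    simp only [map_mul, map_neg, map_intCast, conj_ofReal]
    push_cast
    ring
  rw [map_mul, conj_e, hexponent, e_add, e_intCast, one_mul]

theorem fourierCoeff01_re_eq_zero {g : ℝ → ℂ}
    (hsym : ∀ t ∈ Icc (0 : ℝ) 1, conj (g (1 - t)) = -g t) (h : ℤ) :
    (fourierCoeff01 g h).re = 0 := by
  have hanti : conj (fourierCoeff01 g h) = -fourierCoeff01 g h := by
    rw [← fourierCoeff01_conj_comp_one_sub, fourierCoeff01, fourierCoeff01,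
      ← intervalIntegral.integral_neg]
    refine intervalIntegral.integral_congr fun t ht => ?_
    rw [uIcc_of_le zero_le_one] at ht
    simp only [hsym t ht, neg_mul]
  have := congrArg re hanti
  rw [conj_re, neg_re] at this
  linarith

theorem norm_fourierCoeff01_le {g : ℝ → ℂ} (hg : ContinuousOn g (Icc 0 1))
    (hbv : BoundedVariationOn g (Icc 0 1)) (hg0 : g 0 = 0) (hg1 : g 1 = 0) {h : ℤ} (hh : h ≠ 0) :
    ‖fourierCoeff01 g h‖ ≤ (eVariationOn g (Icc 0 1)).toReal / (2 * Real.pi * |(h : ℝ)|) := by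
  set c : ℂ := 2 * Real.pi * I * -(h : ℂ)
  have hc : ‖c‖ = 2 * Real.pi * |(h : ℝ)| := by
    simp [c, abs_of_pos Real.pi_pos]
  have hc0 : c ≠ 0 := by
    rw [← norm_ne_zero_iff, hc]
    have : (h : ℝ) ≠ 0 := by exact_mod_cast hh
    positivity
  have key := norm_integral_mul_deriv_sub_le zero_le_one hg hbv
    (φ := fun t => e (-(h : ℂ) * t) / c) (φ' := fun t => e (-(h : ℂ) * t))
    (M := 1 / (2 * Real.pi * |(h : ℝ)|)) ?_ ?_ ?_
  · rw [fourierCoeff01, div_eq_mul_one_div]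
    simpa only [hg0, hg1, zero_mul, sub_zero] using key
  · exact fun t _ => ((hasDerivAt_e_mul _ t).div_const c).congr_deriv (mul_div_cancel_right₀ _ hc0)
  · exact fun t _ => (hasDerivAt_e_mul _ t).continuousAt.continuousWithinAt
  · intro t _
    rw [norm_div, norm_e_eq_one (by simp), hc]

end Fourier

/-- If f ∈ F₀ (f continuous on [0,1], f(0)=0, f(t)+conj(f(1-t))=f(1)), f(1) is real in [-2,2],
and g(t) = f(t) - t·f(1) has total variation at most 2 on [0,1], then f ∈ S. -/
theorem stmt_19 (f : ℝ → ℂ)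
    (hcont : ContinuousOn f (Set.Icc 0 1))
    (h0 : f 0 = 0)
    (hsym : ∀ t ∈ Set.Icc (0:ℝ) 1, f t + (starRingEnd ℂ) (f (1 - t)) = f 1)
    (him : (f 1).im = 0) (hre : |(f 1).re| ≤ 2)
    (hvar : eVariationOn (fun t : ℝ => f t - (t : ℂ) * f 1) (Set.Icc 0 1) ≤ 2) :
    memS f := by
  set g : ℝ → ℂ := fun t => f t - (t : ℂ) * f 1
  have hg : ContinuousOn g (Icc 0 1) := hcont.sub (by fun_prop)
  have hbv : BoundedVariationOn g (Icc 0 1) := ne_top_of_le_ne_top ENNReal.ofNat_ne_top hvar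
  have hvar' : (eVariationOn g (Icc 0 1)).toReal ≤ 2 :=
    ENNReal.toReal_le_of_le_ofReal zero_le_two (by simpa using hvar)
  have hgsym : ∀ t ∈ Icc (0 : ℝ) 1, conj (g (1 - t)) = -g t := fun t ht => by
    have hf1 : conj (f 1) = f 1 := Complex.conj_eq_iff_im.2 him
    simp only [g, map_sub, map_mul, Complex.conj_ofReal, hf1, eq_sub_of_add_eq' (hsym t ht)]
    push_cast
    ring
  refine ⟨hcont, h0, him, hre, fun h hh => ⟨fourierCoeff01_re_eq_zero hgsym h, ?_⟩⟩
  calc ‖fourierCoeff01 g h‖ ≤ (eVariationOn g (Icc 0 1)).toReal / (2 * Real.pi * |(h : ℝ)|) :=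
        norm_fourierCoeff01_le hg hbv (by simp [g, h0]) (by simp [g]) hh
    _ ≤ 2 / (2 * Real.pi * |(h : ℝ)|) := by gcongr
    _ = 1 / (Real.pi * |(h : ℝ)|) := by field_simp
end
end
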